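/- For the linearly constrained problem (K = {0}, so the dual is unconstrained), the hybrid scheme that runs k iterations of Algorithm (DFG) followed by gradient ascent steps satisfies improved O(1/k^{3/2}) bounds in the last primal iterate: for all k ≥ 1, ‖G u^{2k} + g‖ ≤ 2 L_d R_d / (k+1)^{3/2} and |f(u^{2k}) − f*| ≤ (2 R_d + ‖x^0‖) · 2 L_d R_d / (k+1)^{3/2}, where u^{2k} = u(x^{2k}). -/

import Mathlib

/-!
By strong convexity of `f`, the dual function `d` is concave with gradient
`∇d(x) = -G u(x) - g`, and this gradient is `L_d = ‖G‖² / σ_f`-Lipschitz.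
The Beck–Teboulle Lyapunov argument for the accelerated phase gives
`(k + 1)² (f* - d(x^k)) ≤ 2 L_d R_d²`, with all iterates in the ball of radius `R_d` around `x*`.
Each plain gradient step increases `d` by at least `‖∇d‖² / (2 L_d)` and, by co-coercivity of
the gradient, increases neither `‖∇d‖` nor the distance to `x*`. Hence the `k + 1` gradient steps
give `(k + 1) ‖∇d(x^{2k})‖² ≤ 2 L_d (f* - d(x^k))`, and together
`‖G u^{2k} + g‖ = ‖∇d(x^{2k})‖ ≤ 2 L_d R_d / (k + 1)^{3/2}`. Finally
`d(x) = f(u(x)) + ⟪x, ∇d(x)⟫` and the supergradient inequality at `x` bound the primal gap by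
`‖∇d(x)‖ · max (‖x‖, ‖x*‖)`.
-/

open scoped RealInnerProductSpace

variable {V : Type*} [NormedAddCommGroup V] [NormedSpace ℝ V]

lemma norm_sub_le_of_extrapolation {a b c : V} {θ R : ℝ} (hθ : 1 ≤ θ) (ha : ‖a - c‖ ≤ R)
    (hb : ‖θ • b - (θ - 1) • a - c‖ ≤ R) :
    ‖b - c‖ ≤ R := by
  have hθ0 : θ ≠ 0 := by positivity
  have hb' : θ • b - (θ - 1) • a ∈ Metric.closedBall c R := by rwa [mem_closedBall_iff_norm]
  have ha' : a ∈ Metric.closedBall c R := by rwa [mem_closedBall_iff_norm]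
  have h1 : 0 ≤ 1 - 1 / θ := by rw [sub_nonneg, div_le_one (by positivity)]; exact hθ
  have hmem := convex_closedBall c R ha' hb' h1 (by positivity : 0 ≤ 1 / θ) (by ring)
  have hb_eq : (1 - 1 / θ) • a + (1 / θ) • (θ • b - (θ - 1) • a) = b := by
    match_scalars <;> field_simp; ring
  rwa [hb_eq, mem_closedBall_iff_norm] at hmem

lemma eq_iterate_of_succ_eq {α : Type*} {T : α → α} {x : ℕ → α} {k m : ℕ}
    (hx : ∀ j, k ≤ j → j < k + m → x (j + 1) = T (x j)) (i : ℕ) (hi : i ≤ m) :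
    x (k + i) = T^[i] (x k) := by
  induction i with
  | zero => rfl
  | succ i ih =>
    rw [Function.iterate_succ_apply', ← ih (by omega), ← hx (k + i) (by omega) (by omega)]
    rfl

lemma le_div_rpow_three_halves_of_mul_sq_le {s e L R c : ℝ} (hc : 0 < c) (hs : 0 ≤ s)
    (hL : 0 ≤ L) (hR : 0 ≤ R) (hse : c * s ^ 2 ≤ 2 * L * e) (he : c ^ 2 * e ≤ 2 * L * R ^ 2) :
    s ≤ 2 * L * R / c ^ ((3 : ℝ) / 2) := by
  have hpow : (c ^ ((3 : ℝ) / 2)) ^ 2 = c ^ 3 := by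
    rw [← Real.rpow_natCast, ← Real.rpow_mul hc.le]; norm_num
  have hsq : (s * c ^ ((3 : ℝ) / 2)) ^ 2 ≤ (2 * L * R) ^ 2 := by
    rw [mul_pow, hpow]
    nlinarith [mul_le_mul_of_nonneg_left hse (sq_nonneg c), mul_le_mul_of_nonneg_left he hL]
  rw [le_div_iff₀ (by positivity)]
  exact (pow_le_pow_iff_left₀ (by positivity) (by positivity) two_ne_zero).1 hsq

lemma UniformConvexOn.subset {s t : Set V} {φ : ℝ → ℝ} {f : V → ℝ} (hf : UniformConvexOn t φ f)
    (hst : s ⊆ t) (hs : Convex ℝ s) : UniformConvexOn s φ f :=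
  ⟨hs, fun _ hx _ hy => hf.2 (hst hx) (hst hy)⟩

lemma norm_sq_smul_one_div {L : ℝ} (hL : 0 < L) (v : V) :
    ‖(1 / L) • v‖ ^ 2 = ‖v‖ ^ 2 / L ^ 2 := by
  rw [norm_smul, Real.norm_of_nonneg (by positivity)]; field_simp

lemma StrongConvexOn.add_sq_norm_sub_le_of_isMinOn {s : Set V} {m : ℝ} {f : V → ℝ} {x₀ x : V}
    (hf : StrongConvexOn s m f) (hx₀ : x₀ ∈ s) (hmin : IsMinOn f s x₀) (hx : x ∈ s) :
    f x₀ + m / 2 * ‖x - x₀‖ ^ 2 ≤ f x := by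
  set c := m / 2 * ‖x - x₀‖ ^ 2
  have hseg : ∀ t ∈ Set.Ioc (0 : ℝ) 1, f x₀ ≤ f x - (1 - t) * c := by
    rintro t ⟨ht0, ht1⟩
    have hconv : f ((1 - t) • x₀ + t • x) ≤ (1 - t) * f x₀ + t * f x - (1 - t) * t * c := by
      simpa only [smul_eq_mul, norm_sub_rev x₀ x] using
        hf.2 hx₀ hx (sub_nonneg.2 ht1) ht0.le (sub_add_cancel 1 t)
    have hle := isMinOn_iff.1 hmin _ (hf.1 hx₀ hx (sub_nonneg.2 ht1) ht0.le (sub_add_cancel 1 t))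
    have : t * f x₀ ≤ t * (f x - (1 - t) * c) := by nlinarith
    exact le_of_mul_le_mul_left this ht0
  have hlim : Filter.Tendsto (fun t => f x - (1 - t) * c) (nhdsWithin 0 (Set.Ioi 0))
      (nhds (f x - c)) := by
    have : Continuous fun t : ℝ => f x - (1 - t) * c := by fun_prop
    simpa using (this.tendsto 0).mono_left nhdsWithin_le_nhds
  have := ge_of_tendsto hlim (Filter.mem_of_superset (Ioc_mem_nhdsGT one_pos) hseg)
  linarith

noncomputable def fistaNext (t : ℝ) : ℝ := (1 + √(1 + 4 * t ^ 2)) / 2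

lemma fistaNext_sq_sub_self (t : ℝ) : fistaNext t ^ 2 - fistaNext t = t ^ 2 := by
  have := Real.sq_sqrt (by positivity : (0 : ℝ) ≤ 1 + 4 * t ^ 2)
  unfold fistaNext
  linear_combination this / 4

lemma add_half_le_fistaNext (t : ℝ) : t + 1 / 2 ≤ fistaNext t := by
  have : 2 * t ≤ √(1 + 4 * t ^ 2) := Real.le_sqrt_of_sq_le (by nlinarith)
  unfold fistaNext
  linarith

lemma half_succ_le_of_fistaNext {θ : ℕ → ℝ} (hθ1 : θ 1 = 1)
    (hrec : ∀ j, 1 ≤ j → θ (j + 1) = fistaNext (θ j)) (j : ℕ) (hj : 1 ≤ j) :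
    ((j : ℝ) + 1) / 2 ≤ θ j := by
  induction j, hj using Nat.le_induction with
  | base => norm_num [hθ1]
  | succ j hj ih =>
    have : (1 : ℝ) ≤ j := by exact_mod_cast hj
    rw [hrec j hj]
    push_cast
    linarith [add_half_le_fistaNext (θ j)]

variable {E : Type*} [NormedAddCommGroup E] [InnerProductSpace ℝ E]

/-- For differentiable `d`, this says that `d` is concave with `L`-Lipschitz gradient `S`. -/
structure SmoothConcave (d : E → ℝ) (S : E → E) (L : ℝ) : Prop where
  pos : 0 < L
  le_add_inner : ∀ a b, d b ≤ d a + ⟪S a, b - a⟫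
  add_inner_sub_le : ∀ a b, d a + ⟪S a, b - a⟫ - L / 2 * ‖b - a‖ ^ 2 ≤ d b

noncomputable def ascentStep (S : E → E) (L : ℝ) (a : E) : E := a + (1 / L) • S a

noncomputable def fistaEnergy (d : E → ℝ) (L : ℝ) (xs : E) (θ : ℝ) (xprev x : E) : ℝ :=
  θ ^ 2 * (d xs - d x) + L / 2 * ‖θ • x - (θ - 1) • xprev - xs‖ ^ 2

namespace SmoothConcave

variable {d : E → ℝ} {S : E → E} {L : ℝ}

lemma ascentStep_sub (a : E) : ascentStep S L a - a = (1 / L) • S a :=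
  add_sub_cancel_left a _

lemma add_inner_add_le_ascentStep (h : SmoothConcave d S L) (a z : E) :
    d z + L * ⟪ascentStep S L a - a, a - z⟫ + L / 2 * ‖ascentStep S L a - a‖ ^ 2
      ≤ d (ascentStep S L a) := by
  have hL := h.pos
  have hup := h.le_add_inner a z
  have hdown := h.add_inner_sub_le a (ascentStep S L a)
  rw [ascentStep_sub, real_inner_smul_right, real_inner_self_eq_norm_sq,
    norm_sq_smul_one_div hL] at hdown
  rw [ascentStep_sub, norm_sq_smul_one_div hL, real_inner_smul_left, ← neg_sub z a, inner_neg_right]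
  have : L * (1 / L * -⟪S a, z - a⟫) = -⟪S a, z - a⟫ := by field_simp
  rw [this]
  have : 1 / L * ‖S a‖ ^ 2 - L / 2 * (‖S a‖ ^ 2 / L ^ 2) = L / 2 * (‖S a‖ ^ 2 / L ^ 2) := by
    field_simp; ring
  linarith

lemma add_norm_sq_le_ascentStep (h : SmoothConcave d S L) (a : E) :
    d a + ‖S a‖ ^ 2 / (2 * L) ≤ d (ascentStep S L a) := by
  have hL := h.pos
  have := h.add_inner_add_le_ascentStep a a
  rw [sub_self, inner_zero_right, ascentStep_sub, norm_sq_smul_one_div hL] at this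
  have e : L / 2 * (‖S a‖ ^ 2 / L ^ 2) = ‖S a‖ ^ 2 / (2 * L) := by field_simp
  linarith

lemma two_mul_sub_sub_inner_le (h : SmoothConcave d S L) (a b : E) :
    2 * L * (d a - d b - ⟪S b, a - b⟫) ≤ -‖S a - S b‖ ^ 2 := by
  have hL := h.pos
  set w := (1 / L) • (S a - S b)
  have hdown := h.add_inner_sub_le a (a + w)
  have hup := h.le_add_inner b (a + w)
  rw [add_sub_cancel_left, real_inner_smul_right, norm_sq_smul_one_div hL] at hdown
  rw [show a + w - b = (a - b) + w by abel, inner_add_right, real_inner_smul_right] at hup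
  have hsq : ⟪S a, S a - S b⟫ - ⟪S b, S a - S b⟫ = ‖S a - S b‖ ^ 2 := by
    rw [← inner_sub_left, real_inner_self_eq_norm_sq]
  have : d a - d b - ⟪S b, a - b⟫ ≤ -(‖S a - S b‖ ^ 2 / (2 * L)) := by
    have e : 1 / L * ‖S a - S b‖ ^ 2 - L / 2 * (‖S a - S b‖ ^ 2 / L ^ 2)
        = ‖S a - S b‖ ^ 2 / (2 * L) := by field_simp; ring
    have e' : 1 / L * ⟪S a, S a - S b⟫ - 1 / L * ⟪S b, S a - S b⟫ = 1 / L * ‖S a - S b‖ ^ 2 := by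
      rw [← hsq]; ring
    linarith
  calc 2 * L * (d a - d b - ⟪S b, a - b⟫) ≤ 2 * L * -(‖S a - S b‖ ^ 2 / (2 * L)) := by gcongr
    _ = -‖S a - S b‖ ^ 2 := by field_simp

lemma cocoercive (h : SmoothConcave d S L) (a b : E) :
    L * ⟪S a - S b, a - b⟫ ≤ -‖S a - S b‖ ^ 2 := by
  have hab := h.two_mul_sub_sub_inner_le a b
  have hba := h.two_mul_sub_sub_inner_le b a
  rw [norm_sub_rev] at hba
  rw [← neg_sub a b, inner_neg_right] at hba
  rw [inner_sub_left]
  linarith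

lemma norm_ascentStep_sub_le (h : SmoothConcave d S L) (a b : E) :
    ‖ascentStep S L a - ascentStep S L b‖ ≤ ‖a - b‖ := by
  have hL := h.pos
  have hv : ascentStep S L a - ascentStep S L b = (a - b) + (1 / L) • (S a - S b) := by
    simp only [ascentStep, smul_sub]; abel
  have hcc := h.cocoercive a b
  have hinner : 2 * ⟪a - b, (1 / L) • (S a - S b)⟫ ≤ -(2 * (‖S a - S b‖ ^ 2 / L ^ 2)) := by
    rw [real_inner_smul_right, real_inner_comm]
    have e : 2 * (1 / L * ⟪S a - S b, a - b⟫) = 2 / L ^ 2 * (L * ⟪S a - S b, a - b⟫) := by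
      field_simp
    rw [e]
    calc 2 / L ^ 2 * (L * ⟪S a - S b, a - b⟫) ≤ 2 / L ^ 2 * -‖S a - S b‖ ^ 2 := by gcongr
      _ = _ := by ring
  rw [hv, ← pow_le_pow_iff_left₀ (norm_nonneg _) (norm_nonneg _) two_ne_zero, norm_add_sq_real,
    norm_sq_smul_one_div hL]
  have : 0 ≤ ‖S a - S b‖ ^ 2 / L ^ 2 := by positivity
  linarith

lemma norm_grad_ascentStep_le (h : SmoothConcave d S L) (a : E) :
    ‖S (ascentStep S L a)‖ ≤ ‖S a‖ := by
  have hL := h.pos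
  set δ := S a - S (ascentStep S L a)
  have hcc := h.cocoercive a (ascentStep S L a)
  rw [← neg_sub (ascentStep S L a) a, ascentStep_sub, inner_neg_right, real_inner_smul_right] at hcc
  have hδ : ‖δ‖ ^ 2 ≤ ⟪δ, S a⟫ := by
    have : L * -(1 / L * ⟪δ, S a⟫) = -⟪δ, S a⟫ := by field_simp
    linarith
  have e : S (ascentStep S L a) = S a - δ := by simp [δ]
  rw [← pow_le_pow_iff_left₀ (norm_nonneg _) (norm_nonneg _) two_ne_zero, e, norm_sub_sq_real,
    real_inner_comm]
  nlinarith [sq_nonneg ‖δ‖]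

lemma grad_eq_zero_of_forall_le (h : SmoothConcave d S L) {xs : E} (hmax : ∀ z, d z ≤ d xs) :
    S xs = 0 := by
  have hL := h.pos
  have hprog := h.add_norm_sq_le_ascentStep xs
  have : ‖S xs‖ ^ 2 / (2 * L) = 0 :=
    le_antisymm (by linarith [hmax (ascentStep S L xs)]) (by positivity)
  simpa [hL.ne'] using this

lemma norm_grad_iterate_antitone (h : SmoothConcave d S L) (a : E) :
    Antitone fun i => ‖S ((ascentStep S L)^[i] a)‖ :=
  antitone_nat_of_succ_le fun i => by
    rw [Function.iterate_succ_apply']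
    exact h.norm_grad_ascentStep_le _

lemma norm_iterate_sub_le (h : SmoothConcave d S L) {xs : E} (hS : S xs = 0) (a : E) (i : ℕ) :
    ‖(ascentStep S L)^[i] a - xs‖ ≤ ‖a - xs‖ := by
  induction i with
  | zero => rfl
  | succ i ih =>
    have hfix : ascentStep S L xs = xs := by simp [ascentStep, hS]
    calc ‖(ascentStep S L)^[i + 1] a - xs‖
        = ‖ascentStep S L ((ascentStep S L)^[i] a) - ascentStep S L xs‖ := by
          rw [Function.iterate_succ_apply', hfix]
      _ ≤ ‖a - xs‖ := (h.norm_ascentStep_sub_le _ _).trans ih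

lemma add_sum_le_iterate (h : SmoothConcave d S L) (a : E) (m : ℕ) :
    d a + ∑ i ∈ Finset.range m, ‖S ((ascentStep S L)^[i] a)‖ ^ 2 / (2 * L)
      ≤ d ((ascentStep S L)^[m] a) := by
  induction m with
  | zero => simp
  | succ m ih =>
    rw [Finset.sum_range_succ, Function.iterate_succ_apply']
    linarith [h.add_norm_sq_le_ascentStep ((ascentStep S L)^[m] a)]

lemma mul_norm_grad_iterate_sq_le (h : SmoothConcave d S L) {xs : E} (hmax : ∀ z, d z ≤ d xs)
    (a : E) (m : ℕ) :
    (m + 1) * ‖S ((ascentStep S L)^[m] a)‖ ^ 2 ≤ 2 * L * (d xs - d a) := by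
  have hL := h.pos
  have hsum : (m + 1) * (‖S ((ascentStep S L)^[m] a)‖ ^ 2 / (2 * L))
      ≤ ∑ i ∈ Finset.range (m + 1), ‖S ((ascentStep S L)^[i] a)‖ ^ 2 / (2 * L) := by
    have := Finset.card_nsmul_le_sum (Finset.range (m + 1))
      (fun i => ‖S ((ascentStep S L)^[i] a)‖ ^ 2 / (2 * L))
      (‖S ((ascentStep S L)^[m] a)‖ ^ 2 / (2 * L)) fun i hi => by
        have := h.norm_grad_iterate_antitone a (Nat.lt_succ_iff.1 (Finset.mem_range.1 hi))
        dsimp only at this ⊢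
        gcongr
    simpa using this
  have := h.add_sum_le_iterate a (m + 1)
  have e : (m + 1) * ‖S ((ascentStep S L)^[m] a)‖ ^ 2
      = 2 * L * ((m + 1) * (‖S ((ascentStep S L)^[m] a)‖ ^ 2 / (2 * L))) := by field_simp
  rw [e]
  exact mul_le_mul_of_nonneg_left (by linarith [hmax ((ascentStep S L)^[m + 1] a)]) (by positivity)

lemma fistaEnergy_ascentStep_le (h : SmoothConcave d S L) {θ θ' : ℝ} (hθ' : 0 < θ')
    (hrel : θ' ^ 2 - θ' = θ ^ 2) {xm x y : E} (hy : y = x + ((θ - 1) / θ') • (x - xm)) (xs : E) :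
    fistaEnergy d L xs θ' x (ascentStep S L y) ≤ fistaEnergy d L xs θ xm x := by
  set xp := ascentStep S L y
  set w := xp - y
  set c := θ • x - (θ - 1) • xm - xs
  have hc : c = (θ' - 1) • (y - x) + (y - xs) := by
    rw [hy]; match_scalars <;> field_simp <;> ring
  have hnext : θ' • xp - (θ' - 1) • x - xs = θ' • w + c := by
    rw [hc]; simp only [w]; module
  have hwc : ⟪w, c⟫ = (θ' - 1) * ⟪w, y - x⟫ + ⟪w, y - xs⟫ := by
    rw [hc, inner_add_right, real_inner_smul_right]
  -- the ascent inequality at `z = x` with weight `θ' (θ' - 1) = θ ^ 2`, plus that at `z = xs`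
  have K1 := mul_le_mul_of_nonneg_left (h.add_inner_add_le_ascentStep y x)
    (show 0 ≤ θ' * (θ' - 1) by nlinarith [sq_nonneg θ])
  have K2 := mul_le_mul_of_nonneg_left (h.add_inner_add_le_ascentStep y xs) hθ'.le
  unfold fistaEnergy
  rw [hnext, norm_add_sq_real, real_inner_smul_left, norm_smul, Real.norm_of_nonneg hθ'.le, hwc,
    ← hrel]
  linarith

lemma fistaEnergy_invariant (h : SmoothConcave d S L) {xs : E} (hmax : ∀ z, d z ≤ d xs)
    {θ θ' R : ℝ} (hθ' : 1 ≤ θ') (hrel : θ' ^ 2 - θ' = θ ^ 2) {xm x y : E}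
    (hy : y = x + ((θ - 1) / θ') • (x - xm)) (hE : fistaEnergy d L xs θ xm x ≤ L / 2 * R ^ 2)
    (hx : ‖x - xs‖ ≤ R) :
    fistaEnergy d L xs θ' x (ascentStep S L y) ≤ L / 2 * R ^ 2 ∧ ‖ascentStep S L y - xs‖ ≤ R := by
  have hL := h.pos
  have hE' := (h.fistaEnergy_ascentStep_le (by positivity) hrel hy xs).trans hE
  refine ⟨hE', norm_sub_le_of_extrapolation hθ' hx ?_⟩
  have hgap : 0 ≤ θ' ^ 2 * (d xs - d (ascentStep S L y)) := by
    nlinarith [hmax (ascentStep S L y)]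
  have hsq : ‖θ' • ascentStep S L y - (θ' - 1) • x - xs‖ ^ 2 ≤ R ^ 2 := by
    unfold fistaEnergy at hE'
    nlinarith
  exact (pow_le_pow_iff_left₀ (norm_nonneg _) ((norm_nonneg _).trans hx) two_ne_zero).1 hsq

theorem fista_bound (h : SmoothConcave d S L) {xs : E} (hmax : ∀ z, d z ≤ d xs) {θ : ℕ → ℝ}
    (hθ1 : θ 1 = 1) (hrec : ∀ j, 1 ≤ j → θ (j + 1) = fistaNext (θ j)) {k : ℕ} {x y : ℕ → E}
    (hy1 : y 1 = x 0) (hx : ∀ j, 1 ≤ j → j ≤ k → x j = ascentStep S L (y j))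
    (hy : ∀ j, 1 ≤ j → j < k → y (j + 1) = x j + ((θ j - 1) / θ (j + 1)) • (x j - x (j - 1)))
    (j : ℕ) (hj : 1 ≤ j) (hjk : j ≤ k) :
    fistaEnergy d L xs (θ j) (x (j - 1)) (x j) ≤ L / 2 * ‖x 0 - xs‖ ^ 2 ∧
      ‖x j - xs‖ ≤ ‖x 0 - xs‖ := by
  induction j, hj using Nat.le_induction with
  | base =>
    -- the first step is the general one, taken from `θ = 0` and `x₋₁ = x₀`
    rw [hx 1 le_rfl hjk, hθ1, Nat.sub_self]
    refine h.fistaEnergy_invariant hmax (θ := 0) le_rfl (by norm_num) (xm := x 0) ?_ ?_ le_rfl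
    · rw [hy1]; simp
    · simp [fistaEnergy]
  | succ j hj ih =>
    obtain ⟨hE, hdist⟩ := ih (by omega)
    have hθ : 1 ≤ θ (j + 1) := by
      have := half_succ_le_of_fistaNext hθ1 hrec (j + 1) (by omega)
      have : (1 : ℝ) ≤ j := by exact_mod_cast hj
      push_cast at *
      linarith
    rw [hx (j + 1) (by omega) hjk, Nat.add_sub_cancel]
    exact h.fistaEnergy_invariant hmax hθ (by rw [hrec j hj]; exact fistaNext_sq_sub_self _)
      (hy j hj (by omega)) hE hdist

theorem fista_rate (h : SmoothConcave d S L) {xs : E} (hmax : ∀ z, d z ≤ d xs) {θ : ℕ → ℝ}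
    (hθ1 : θ 1 = 1) (hrec : ∀ j, 1 ≤ j → θ (j + 1) = fistaNext (θ j)) {k : ℕ} (hk : 1 ≤ k)
    {x y : ℕ → E} (hy1 : y 1 = x 0) (hx : ∀ j, 1 ≤ j → j ≤ k → x j = ascentStep S L (y j))
    (hy : ∀ j, 1 ≤ j → j < k → y (j + 1) = x j + ((θ j - 1) / θ (j + 1)) • (x j - x (j - 1))) :
    ((k : ℝ) + 1) ^ 2 * (d xs - d (x k)) ≤ 2 * L * ‖x 0 - xs‖ ^ 2 ∧ ‖x k - xs‖ ≤ ‖x 0 - xs‖ := by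
  obtain ⟨hE, hdist⟩ := h.fista_bound hmax hθ1 hrec hy1 hx hy k hk le_rfl
  refine ⟨?_, hdist⟩
  have hθk := half_succ_le_of_fistaNext hθ1 hrec k hk
  have hgap := sub_nonneg.2 (hmax (x k))
  have hsq : ((k : ℝ) + 1) ^ 2 ≤ 4 * θ k ^ 2 := by nlinarith [(k.cast_nonneg : (0 : ℝ) ≤ k)]
  have hL := h.pos
  have : 0 ≤ L / 2 * ‖θ k • x k - (θ k - 1) • x (k - 1) - xs‖ ^ 2 := by positivity
  unfold fistaEnergy at hE
  linarith [mul_le_mul_of_nonneg_right hsq hgap]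

end SmoothConcave

section Lagrangian

variable {F : Type*} [NormedAddCommGroup F] [InnerProductSpace ℝ F]

noncomputable def lagrangian (f : E → ℝ) (G : E →L[ℝ] F) (g : F) (u : E) (x : F) : ℝ :=
  f u + ⟪x, -(G u) - g⟫

def IsLagrangianArgmin (f : E → ℝ) (G : E →L[ℝ] F) (g : F) (U : Set E) (uu : F → E) : Prop :=
  ∀ x, uu x ∈ U ∧ ∀ u ∈ U, lagrangian f G g (uu x) x ≤ lagrangian f G g u x

def dualGrad (G : E →L[ℝ] F) (g : F) (uu : F → E) (x : F) : F := -(G (uu x)) - g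

lemma StrongConvexOn.lagrangian {s : Set E} {σ : ℝ} {f : E → ℝ} (hf : StrongConvexOn s σ f)
    (G : E →L[ℝ] F) (g x : F) : StrongConvexOn s σ fun u => lagrangian f G g u x := by
  refine ⟨hf.1, fun u hu v hv a b ha hb hab => ?_⟩
  obtain rfl : b = 1 - a := by linarith
  have hlin : ⟪x, -(G (a • u + (1 - a) • v)) - g⟫
      = a * ⟪x, -(G u) - g⟫ + (1 - a) * ⟪x, -(G v) - g⟫ := by
    rw [← real_inner_smul_right, ← real_inner_smul_right, ← inner_add_right, map_add, map_smul,
      map_smul]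
    congr 1
    module
  have hconv := hf.2 hu hv ha hb hab
  simp only [_root_.lagrangian, smul_eq_mul, hlin] at hconv ⊢
  linarith

variable {f : E → ℝ} {G : E →L[ℝ] F} {g : F} {U : Set E} {uu : F → E}

lemma lagrangian_eq_add_inner (u : E) (a b : F) :
    lagrangian f G g u b = lagrangian f G g u a + ⟪b - a, -(G u) - g⟫ := by
  simp only [lagrangian, inner_sub_left]
  ring

lemma dual_le_add_inner (huu : IsLagrangianArgmin f G g U uu) (a b : F) :
    lagrangian f G g (uu b) b ≤ lagrangian f G g (uu a) a + ⟪dualGrad G g uu a, b - a⟫ :=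
  calc lagrangian f G g (uu b) b ≤ lagrangian f G g (uu a) b := (huu b).2 _ (huu a).1
    _ = _ := by rw [lagrangian_eq_add_inner (uu a) a b, real_inner_comm]; rfl

lemma add_inner_sub_le_dual {σ : ℝ} (hσ : 0 < σ) (hf : StrongConvexOn U σ f)
    (huu : IsLagrangianArgmin f G g U uu) (a b : F) :
    lagrangian f G g (uu a) a + ⟪dualGrad G g uu a, b - a⟫ - ‖G‖ ^ 2 / σ / 2 * ‖b - a‖ ^ 2
      ≤ lagrangian f G g (uu b) b := by
  set D := ‖uu b - uu a‖
  have hgrowth : lagrangian f G g (uu a) a + σ / 2 * D ^ 2 ≤ lagrangian f G g (uu b) a :=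
    (hf.lagrangian G g a).add_sq_norm_sub_le_of_isMinOn (huu a).1 (isMinOn_iff.2 (huu a).2)
      (huu b).1
  have hsplit : ⟪b - a, -(G (uu b)) - g⟫
      = ⟪dualGrad G g uu a, b - a⟫ - ⟪b - a, G (uu b - uu a)⟫ := by
    simp only [dualGrad, map_sub, inner_sub_right, inner_neg_right, real_inner_comm (b - a)]
    ring
  have hcs : ⟪b - a, G (uu b - uu a)⟫ ≤ ‖b - a‖ * (‖G‖ * D) :=
    (real_inner_le_norm _ _).trans (by gcongr; exact G.le_opNorm _)
  -- AM-GM, splitting off exactly the quadratic growth term of `hgrowth`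
  have hamgm : ‖b - a‖ * (‖G‖ * D) ≤ σ / 2 * D ^ 2 + ‖G‖ ^ 2 / σ / 2 * ‖b - a‖ ^ 2 := by
    have e : σ / 2 * D ^ 2 + ‖G‖ ^ 2 / σ / 2 * ‖b - a‖ ^ 2 - ‖b - a‖ * (‖G‖ * D)
        = (σ * D - ‖G‖ * ‖b - a‖) ^ 2 / (2 * σ) := by field_simp; ring
    linarith [show 0 ≤ (σ * D - ‖G‖ * ‖b - a‖) ^ 2 / (2 * σ) by positivity]
  rw [lagrangian_eq_add_inner (uu b) a b, hsplit]
  linarith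

theorem smoothConcave_dual {σ : ℝ} (hσ : 0 < σ) (hG : G ≠ 0) (hf : StrongConvexOn U σ f)
    (huu : IsLagrangianArgmin f G g U uu) :
    SmoothConcave (fun x => lagrangian f G g (uu x) x) (dualGrad G g uu) (‖G‖ ^ 2 / σ) where
  pos := by have := norm_pos_iff.2 hG; positivity
  le_add_inner := dual_le_add_inner huu
  add_inner_sub_le := add_inner_sub_le_dual hσ hf huu

lemma dual_le_of_feasible (huu : IsLagrangianArgmin f G g U uu) {u : E} (hu : u ∈ U)
    (hfeas : G u + g = 0) (x : F) : lagrangian f G g (uu x) x ≤ f u :=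
  calc lagrangian f G g (uu x) x ≤ lagrangian f G g u x := (huu x).2 u hu
    _ = f u := by
      rw [lagrangian, ← neg_add', hfeas, neg_zero, inner_zero_right, add_zero]

lemma abs_sub_dual_le (huu : IsLagrangianArgmin f G g U uu) {x xs : F}
    (hmax : ∀ z, lagrangian f G g (uu z) z ≤ lagrangian f G g (uu xs) xs) {B : ℝ}
    (hx : ‖x‖ ≤ B) (hxs : ‖xs‖ ≤ B) :
    |f (uu x) - lagrangian f G g (uu xs) xs| ≤ B * ‖dualGrad G g uu x‖ := by
  have hdual : lagrangian f G g (uu x) x = f (uu x) + ⟪x, dualGrad G g uu x⟫ := rfl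
  have hsup := dual_le_add_inner huu x xs
  rw [inner_sub_right, real_inner_comm x] at hsup
  have h1 : |⟪x, dualGrad G g uu x⟫| ≤ B * ‖dualGrad G g uu x‖ :=
    (abs_real_inner_le_norm _ _).trans (by gcongr)
  have h2 : |⟪dualGrad G g uu x, xs⟫| ≤ B * ‖dualGrad G g uu x‖ :=
    (abs_real_inner_le_norm _ _).trans (by rw [mul_comm]; gcongr)
  rw [abs_le]
  constructor <;> linarith [abs_le.1 h1, abs_le.1 h2, hmax x]

end Lagrangian

theorem stmt_19_general {n p : ℕ}
    (f : EuclideanSpace ℝ (Fin n) → ℝ) (σf : ℝ) (hσf : 0 < σf)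
    (hfsc : StrongConvexOn Set.univ σf f)
    (U : Set (EuclideanSpace ℝ (Fin n))) (hUcv : Convex ℝ U)
    (G : EuclideanSpace ℝ (Fin n) →L[ℝ] EuclideanSpace ℝ (Fin p)) (hG : G ≠ 0) (g : EuclideanSpace ℝ (Fin p))
    (Lag : EuclideanSpace ℝ (Fin n) → EuclideanSpace ℝ (Fin p) → ℝ)
    (hLag : ∀ u x, Lag u x = f u + ⟪x, -(G u) - g⟫)
    (uu : EuclideanSpace ℝ (Fin p) → EuclideanSpace ℝ (Fin n))
    (huu : ∀ x : EuclideanSpace ℝ (Fin p), uu x ∈ U ∧ ∀ u ∈ U, Lag (uu x) x ≤ Lag u x)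
    (d : EuclideanSpace ℝ (Fin p) → ℝ) (hd : ∀ x, d x = Lag (uu x) x)
    (ustar : EuclideanSpace ℝ (Fin n))
    (hustar : ustar ∈ U ∧ G ustar + g = 0 ∧ ∀ u ∈ U, G u + g = 0 → f ustar ≤ f u)
    (fstar : ℝ) (hfstar : fstar = f ustar)
    (Xstar : Set (EuclideanSpace ℝ (Fin p))) (hXstar : Xstar = {x : EuclideanSpace ℝ (Fin p) | d x = fstar})
    (Ld : ℝ) (hLd : Ld = ‖G‖ ^ 2 / σf)
    (θ : ℕ → ℝ) (hθ1 : θ 1 = 1)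
    (hθrec : ∀ k, 1 ≤ k → θ (k + 1) = (1 + Real.sqrt (1 + 4 * θ k ^ 2)) / 2)
    (k : ℕ) (hk : 1 ≤ k) (x y : ℕ → EuclideanSpace ℝ (Fin p)) (hy1 : y 1 = x 0)
    (hDFGx : ∀ j, 1 ≤ j → j ≤ k →
      x j = y j + (1 / Ld) • (-(G (uu (y j))) - g))
    (hDFGy : ∀ j, 1 ≤ j → j < k →
      y (j + 1) = x j + ((θ j - 1) / θ (j + 1)) • (x j - x (j - 1)))
    (hDG : ∀ j, k ≤ j → j ≤ 2 * k →
      x (j + 1) = x j + (1 / Ld) • (-(G (uu (x j))) - g))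
    (xstar : EuclideanSpace ℝ (Fin p)) (hxstar : xstar ∈ Xstar)
    (Rd : ℝ) (hRd : Rd = ‖x 0 - xstar‖)
 :
    ‖G (uu (x (2 * k))) + g‖ ≤ 2 * Ld * Rd / ((k : ℝ) + 1) ^ ((3 : ℝ) / 2) ∧
    |f (uu (x (2 * k))) - fstar| ≤
      (2 * Rd + ‖x 0‖) * (2 * Ld * Rd / ((k : ℝ) + 1) ^ ((3 : ℝ) / 2)) := by
  subst hRd
  obtain rfl : Lag = lagrangian f G g := funext₂ hLag
  obtain rfl : d = fun x => lagrangian f G g (uu x) x := funext hd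
  set S := dualGrad G g uu
  have hsc : SmoothConcave _ S Ld :=
    hLd ▸ smoothConcave_dual hσf hG (hfsc.subset (Set.subset_univ U) hUcv) huu
  have hdxs : lagrangian f G g (uu xstar) xstar = fstar := by rw [hXstar] at hxstar; exact hxstar
  have hmax z : lagrangian f G g (uu z) z ≤ lagrangian f G g (uu xstar) xstar :=
    hdxs ▸ hfstar ▸ dual_le_of_feasible huu hustar.1 hustar.2.1 z
  obtain ⟨hrate, hdistk⟩ := hsc.fista_rate hmax hθ1 hθrec hk hy1 hDFGx hDFGy
  have h2k : x (2 * k) = (ascentStep S Ld)^[k] (x k) := by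
    rw [two_mul]; exact eq_iterate_of_succ_eq (fun j h1 h2 => hDG j h1 (by omega)) k le_rfl
  have hgrad := hsc.mul_norm_grad_iterate_sq_le hmax (x k) k
  have hdist := (hsc.norm_iterate_sub_le (hsc.grad_eq_zero_of_forall_le hmax) (x k) k).trans hdistk
  rw [← h2k] at hgrad hdist
  have hS := le_div_rpow_three_halves_of_mul_sq_le (by positivity) (norm_nonneg _) hsc.pos.le
    (norm_nonneg _) hgrad hrate
  have hGS : G (uu (x (2 * k))) + g = -S (x (2 * k)) := by simp only [S, dualGrad]; abel
  refine ⟨by rwa [hGS, norm_neg], ?_⟩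
  have hxs : ‖xstar‖ ≤ ‖x 0 - xstar‖ + ‖x 0‖ := by
    linarith [norm_le_norm_add_norm_sub' xstar (x 0), norm_sub_rev xstar (x 0)]
  have hx2k : ‖x (2 * k)‖ ≤ 2 * ‖x 0 - xstar‖ + ‖x 0‖ := by
    linarith [norm_le_norm_add_norm_sub' (x (2 * k)) xstar]
  calc |f (uu (x (2 * k))) - fstar| ≤ (2 * ‖x 0 - xstar‖ + ‖x 0‖) * ‖S (x (2 * k))‖ :=
        hdxs ▸ abs_sub_dual_le huu hmax hx2k (by linarith [norm_nonneg (x 0 - xstar)])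
    _ ≤ _ := by gcongr

theorem stmt_19 {n p : ℕ}
    (f : EuclideanSpace ℝ (Fin n) → ℝ) (σf : ℝ) (hσf : 0 < σf)
    (hfc : Continuous f) (hfsc : StrongConvexOn Set.univ σf f)
    (U : Set (EuclideanSpace ℝ (Fin n))) (hUne : U.Nonempty) (hUcl : IsClosed U) (hUcv : Convex ℝ U)
    (G : EuclideanSpace ℝ (Fin n) →L[ℝ] EuclideanSpace ℝ (Fin p)) (hG : G ≠ 0) (g : EuclideanSpace ℝ (Fin p))
    (Lag : EuclideanSpace ℝ (Fin n) → EuclideanSpace ℝ (Fin p) → ℝ)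
    (hLag : ∀ u x, Lag u x = f u + ⟪x, -(G u) - g⟫)
    (uu : EuclideanSpace ℝ (Fin p) → EuclideanSpace ℝ (Fin n))
    (huu : ∀ x : EuclideanSpace ℝ (Fin p), uu x ∈ U ∧ ∀ u ∈ U, Lag (uu x) x ≤ Lag u x)
    (d : EuclideanSpace ℝ (Fin p) → ℝ) (hd : ∀ x, d x = Lag (uu x) x)
    (ustar : EuclideanSpace ℝ (Fin n))
    (hustar : ustar ∈ U ∧ G ustar + g = 0 ∧ ∀ u ∈ U, G u + g = 0 → f ustar ≤ f u)
    (fstar : ℝ) (hfstar : fstar = f ustar)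
    (Xstar : Set (EuclideanSpace ℝ (Fin p))) (hXstar : Xstar = {x : EuclideanSpace ℝ (Fin p) | d x = fstar})
    (hXne : Xstar.Nonempty)
    (Ld : ℝ) (hLd : Ld = ‖G‖ ^ 2 / σf)
    (θ : ℕ → ℝ) (hθ0 : θ 0 = 0) (hθ1 : θ 1 = 1)
    (hθrec : ∀ k, 1 ≤ k → θ (k + 1) = (1 + Real.sqrt (1 + 4 * θ k ^ 2)) / 2)
    (k : ℕ) (hk : 1 ≤ k) (x y : ℕ → EuclideanSpace ℝ (Fin p)) (hy1 : y 1 = x 0)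
    (hDFGx : ∀ j, 1 ≤ j → j ≤ k →
      x j = y j + (1 / Ld) • (-(G (uu (y j))) - g))
    (hDFGy : ∀ j, 1 ≤ j → j < k →
      y (j + 1) = x j + ((θ j - 1) / θ (j + 1)) • (x j - x (j - 1)))
    (hDG : ∀ j, k ≤ j → j ≤ 2 * k →
      x (j + 1) = x j + (1 / Ld) • (-(G (uu (x j))) - g))
    (xstar : EuclideanSpace ℝ (Fin p)) (hxstar : xstar ∈ Xstar)
    (hxstarmin : ∀ z ∈ Xstar, ‖x 0 - xstar‖ ≤ ‖x 0 - z‖)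
    (Rd : ℝ) (hRd : Rd = ‖x 0 - xstar‖)
 :
    ‖G (uu (x (2 * k))) + g‖ ≤ 2 * Ld * Rd / ((k : ℝ) + 1) ^ ((3 : ℝ) / 2) ∧
    |f (uu (x (2 * k))) - fstar| ≤
      (2 * Rd + ‖x 0‖) * (2 * Ld * Rd / ((k : ℝ) + 1) ^ ((3 : ℝ) / 2)) :=
  stmt_19_general f σf hσf hfsc U hUcv G hG g Lag hLag uu huu d hd ustar hustar fstar hfstar Xstar
    hXstar Ld hLd θ hθ1 hθrec k hk x y hy1 hDFGx hDFGy hDG xstar hxstar Rd hRd
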